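/- arXiv:2512.03273 — 7 statements merged into one kernel-verified Lean document; each statement's English description precedes it below -/
import Mathlib

section
/- Let n be an even positive integer. Then (1/2)·C(n, n/2) is an odd integer if n is a power of 2, and an even integer otherwise. -/
/-!
By Kummer's theorem the `2`-adic valuation of `C(2m, m)` is the number of carries when adding
`m` to itself in base `2`, which is the binary digit sum `s(m) = s(2m)`. This is always positive,
and it equals `1` exactly when `2m` is a power of `2`; so `C(2m, m) / 2` is odd precisely in
that case.
-/

namespace Nat

theorem digits_sum_pos (b : ℕ) {m : ℕ} (hm : m ≠ 0) : 0 < (b.digits m).sum :=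
  (Nat.pos_of_ne_zero (getLast_digit_ne_zero b hm)).trans_le
    (List.le_sum_of_mem (List.getLast_mem _))

theorem digits_sum_base_mul {b : ℕ} (hb : 1 < b) (m : ℕ) :
    (b.digits (b * m)).sum = (b.digits m).sum := by
  rcases Nat.eq_zero_or_pos m with rfl | hm
  · simp
  · simp [digits_base_mul hb hm]

theorem digits_sum_eq_one_iff {b : ℕ} (hb : 1 < b) {m : ℕ} :
    (b.digits m).sum = 1 ↔ ∃ k, m = b ^ k := by
  constructor
  · induction m using Nat.strong_induction_on with
    | _ m ih =>
      intro hsum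
      have hm : m ≠ 0 := by rintro rfl; simp at hsum
      rw [digits_def' hb (Nat.pos_of_ne_zero hm), List.sum_cons] at hsum
      have hdiv := Nat.div_add_mod m b
      rcases Nat.eq_zero_or_pos (m / b) with hq | hq
      · rw [hq, digits_zero, List.sum_nil] at hsum
        exact ⟨0, by rw [hq, mul_zero] at hdiv; rw [pow_zero]; omega⟩
      · have hlt : m / b < m := Nat.div_lt_self (Nat.pos_of_ne_zero hm) hb
        have hpos := digits_sum_pos b hq.ne'
        obtain ⟨k, hk⟩ := ih (m / b) hlt (by omega)
        exact ⟨k + 1, by rw [pow_succ', ← hk]; omega⟩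
  · rintro ⟨k, rfl⟩
    simpa [digits_of_lt b 1 one_ne_zero hb] using
      congrArg List.sum (digits_base_pow_mul (k := k) hb Nat.one_pos)

theorem even_div_two_iff {c : ℕ} (h : 2 ∣ c) : Even (c / 2) ↔ 4 ∣ c := by
  obtain ⟨d, rfl⟩ := h
  rw [Nat.mul_div_cancel_left d two_pos, even_iff_two_dvd, show 4 = 2 * 2 by rfl,
    Nat.mul_dvd_mul_iff_left two_pos]

theorem padicValNat_two_centralBinom (m : ℕ) :
    padicValNat 2 m.centralBinom = (digits 2 m).sum := by
  have kummer := sub_one_mul_padicValNat_choose_eq_sub_sum_digits' (p := 2) (k := m) (n := m)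
  rw [← two_mul, digits_sum_base_mul one_lt_two, ← centralBinom_eq_two_mul_choose] at kummer
  omega

end Nat

theorem stmt_0 (n : ℕ) (hn : 0 < n) (hev : Even n) :
    2 ∣ n.choose (n / 2) ∧
    ((∃ k : ℕ, n = 2 ^ k) → Odd (n.choose (n / 2) / 2)) ∧
    ((¬ ∃ k : ℕ, n = 2 ^ k) → Even (n.choose (n / 2) / 2)) := by
  obtain ⟨m, rfl⟩ := hev
  have hcentral : (m + m).choose ((m + m) / 2) = m.centralBinom := by
    rw [Nat.centralBinom_eq_two_mul_choose, ← two_mul, Nat.mul_div_cancel_left m two_pos]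
  have hval : padicValNat 2 m.centralBinom = (Nat.digits 2 (m + m)).sum := by
    rw [← two_mul, Nat.digits_sum_base_mul one_lt_two, Nat.padicValNat_two_centralBinom]
  have hpos := Nat.digits_sum_pos 2 hn.ne'
  have hdvd (i : ℕ) : 2 ^ i ∣ m.centralBinom ↔ i ≤ (Nat.digits 2 (m + m)).sum := by
    rw [padicValNat_dvd_iff_le (Nat.centralBinom_ne_zero m), hval]
  have htwo : 2 ∣ m.centralBinom := by simpa using (hdvd 1).2 hpos
  rw [hcentral, ← Nat.digits_sum_eq_one_iff one_lt_two]
  refine ⟨htwo, fun hone => ?_, fun hne => ?_⟩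
  · rw [← Nat.not_even_iff_odd, Nat.even_div_two_iff htwo, show 4 = 2 ^ 2 by rfl, hdvd]
    omega
  · rw [Nat.even_div_two_iff htwo, show 4 = 2 ^ 2 by rfl, hdvd]
    omega
end

section
/- For even n ≥ 2, the identity 2·Σ_{j=0}^{n/2-1} (n-2j)·C(n-1, j) = n·C(n-1, n/2) + 2^(n-1) holds. -/
theorem stmt_3 (n : ℕ) (hn : 2 ≤ n) (hev : Even n) :
    2 * ∑ j ∈ Finset.range (n / 2), (n - 2 * j) * (n - 1).choose j =
      n * (n - 1).choose (n / 2) + 2 ^ (n - 1) := by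
  obtain ⟨m, rfl⟩ := hev
  have hm : 1 ≤ m := by omega
  have hhalf : (m + m) / 2 = m := by omega
  rw [hhalf]
  -- pointwise identity
  have h1 : ∀ j ∈ Finset.range m,
      (m + m - 2 * j) * (m + m - 1).choose j + j * (m + m - 1).choose j
        = (j + 1) * (m + m - 1).choose (j + 1) + (m + m - 1).choose j := by
    intro j hj
    simp only [Finset.mem_range] at hj
    have h2 : (m + m - 1).choose (j + 1) * (j + 1)
        = (m + m - 1).choose j * (m + m - 1 - j) := Nat.choose_succ_right_eq _ _
    have h3 : (j + 1) * (m + m - 1).choose (j + 1)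
        = (m + m - 1 - j) * (m + m - 1).choose j := by
      rw [mul_comm, h2, mul_comm]
    rw [h3, ← add_mul, ← add_one_mul]
    congr 1
    omega
  have hsum := Finset.sum_congr rfl h1
  rw [Finset.sum_add_distrib, Finset.sum_add_distrib] at hsum
  have hshift : ∑ j ∈ Finset.range m, (j + 1) * (m + m - 1).choose (j + 1)
      = (∑ j ∈ Finset.range m, j * (m + m - 1).choose j)
        + m * (m + m - 1).choose m := by
    have := Finset.sum_range_succ' (fun j => j * (m + m - 1).choose j) m
    simp at this
    rw [← this, Finset.sum_range_succ]
  rw [hshift] at hsum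
  have key : ∑ j ∈ Finset.range m, (m + m - 2 * j) * (m + m - 1).choose j
      = m * (m + m - 1).choose m + ∑ j ∈ Finset.range m, (m + m - 1).choose j := by
    omega
  rw [key]
  have hhalfway : ∑ i ∈ Finset.range m, (m + m - 1).choose i = 4 ^ (m - 1) := by
    have := Nat.sum_range_choose_halfway (m - 1)
    have e1 : 2 * (m - 1) + 1 = m + m - 1 := by omega
    have e2 : m - 1 + 1 = m := by omega
    rw [e1, e2] at this
    exact this
  rw [hhalfway]
  have hpow : 2 * 4 ^ (m - 1) = 2 ^ (m + m - 1) := by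
    have : (4 : ℕ) ^ (m - 1) = 2 ^ (2 * (m - 1)) := by
      rw [pow_mul]; norm_num
    rw [this, ← pow_succ']
    congr 1
    omega
  rw [mul_add, hpow]
  ring
end

section
/- Let n be odd, n ≥ 3, and V = { v ∈ {-1,1}ⁿ : v₁ = 1 }. Define ε_v = 1 if Σ_i v_i > 0 and ε_v = -1 if Σ_i v_i < 0 (the sum is never 0 since n is odd). Then Σ_{v∈V} ε_v·v = C(n-1, (n-1)/2)·𝟏, where 𝟏 is the all-ones vector. -/
open Finset in
lemma auxA_stmt11 (k : ℕ) :
    ∑ t ∈ Finset.range (2*k+1), ((if k ≤ t then (1:ℝ) else -1) * ((2*k).choose t : ℝ))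
      = ((2*k).choose k : ℝ) := by
  set f : ℕ → ℝ := fun t => (if k ≤ t then (1:ℝ) else -1) * ((2*k).choose t : ℝ) with hf
  have h1 : ∑ t ∈ Finset.range (2*k+1), f (2*k - t) = ∑ t ∈ Finset.range (2*k+1), f t :=
    Finset.sum_flip f
  have h2 : ∀ t ∈ Finset.range (2*k+1),
      f t + f (2*k - t) = if t = k then 2 * ((2*k).choose t : ℝ) else 0 := by
    intro t ht
    simp only [Finset.mem_range] at ht
    have ht' : t ≤ 2*k := by omega
    have hsymm : (2*k).choose (2*k - t) = (2*k).choose t := Nat.choose_symm ht'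
    simp only [hf, hsymm]
    rcases lt_trichotomy t k with h|h|h
    · rw [if_neg (by omega), if_pos (by omega : k ≤ 2*k - t), if_neg (by omega)]; ring
    · subst h; rw [if_pos le_rfl, if_pos (by omega), if_pos rfl]; ring
    · rw [if_pos h.le, if_neg (by omega), if_neg (by omega)]; ring
  have h3 : ∑ t ∈ Finset.range (2*k+1), (f t + f (2*k - t))
      = ∑ t ∈ Finset.range (2*k+1), (if t = k then 2 * ((2*k).choose t : ℝ) else 0) :=
    Finset.sum_congr rfl h2
  rw [Finset.sum_add_distrib, h1, Finset.sum_ite_eq' (Finset.range (2*k+1)) k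
    (fun t => 2 * ((2*k).choose t : ℝ)), if_pos (by simp; omega)] at h3
  linarith

theorem stmt_11 (n : ℕ) (hn : 3 ≤ n) (hodd : Odd n) (V : Finset (Fin n → ℝ))
    (hV : ∀ v : Fin n → ℝ, v ∈ V ↔ ((∀ i, v i = 1 ∨ v i = -1) ∧ v ⟨0, by omega⟩ = 1)) :
    ∑ v ∈ V, (if 0 < ∑ i, v i then (1 : ℝ) else -1) • v =
      fun _ => ((n - 1).choose ((n - 1) / 2) : ℝ) := by
  classical
  obtain ⟨k, hk⟩ := hodd
  have hk1 : 1 ≤ k := by omega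
  set z : Fin n := ⟨0, by omega⟩ with hz
  set g : Finset (Fin n) → (Fin n → ℝ) := fun S i => if i ∈ insert z S then 1 else -1 with hg
  set U : Finset (Fin n) := Finset.univ.erase z with hU
  have hUcard : U.card = 2 * k := by
    rw [hU, Finset.card_erase_of_mem (Finset.mem_univ z), Finset.card_univ, Fintype.card_fin]
    omega
  -- sum over a g S
  have hsum : ∀ S : Finset (Fin n), S ⊆ U → ∑ i, g S i = 2 * (S.card : ℝ) + 2 - n := by
    intro S hS
    have hzS : z ∉ S := fun h => (Finset.mem_erase.mp (hS h)).1 rfl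
    have hcard : (insert z S).card = S.card + 1 := Finset.card_insert_of_notMem hzS
    have : ∀ i, g S i = (if i ∈ insert z S then (2:ℝ) else 0) - 1 := by
      intro i; simp only [hg]; split <;> norm_num
    rw [Finset.sum_congr rfl fun i _ => this i, Finset.sum_sub_distrib]
    rw [Finset.sum_ite_mem, Finset.univ_inter, Finset.sum_const, hcard]
    simp [mul_comm]
    push_cast
    ring
  -- V is the image of the powerset
  have hVeq : V = U.powerset.image g := by
    ext v
    rw [hV, Finset.mem_image]
    constructor
    · rintro ⟨h1, h2⟩
      refine ⟨(Finset.univ.filter (fun i => v i = 1)).erase z, by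
        simp [hU, Finset.erase_subset_erase, Finset.filter_subset], ?_⟩
      funext i
      simp only [hg]
      by_cases hi : i = z
      · subst hi; rw [if_pos (Finset.mem_insert_self _ _)]; exact h2.symm
      · rcases h1 i with h | h
        · rw [if_pos (Finset.mem_insert.mpr (Or.inr (by simp [hi, h])))]; exact h.symm
        · rw [if_neg]; · exact h.symm
          · simp only [Finset.mem_insert, Finset.mem_erase, Finset.mem_filter]
            push_neg
            exact ⟨hi, fun _ _ => by rw [h] at *; intro hc; norm_num at hc⟩
    · rintro ⟨S, hS, rfl⟩
      constructor
      · intro i; simp only [hg]; split <;> simp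
      · simp only [hg]
        rw [if_pos (Finset.mem_insert_self _ _)]
  have hinj : ∀ S ∈ U.powerset, ∀ T ∈ U.powerset, g S = g T → S = T := by
    intro S hS T hT hST
    rw [Finset.mem_powerset] at hS hT
    ext i
    have hi1 := congrFun hST i
    simp only [hg] at hi1
    constructor
    · intro hiS
      have hiz : i ≠ z := fun h => (Finset.mem_erase.mp (hS hiS)).1 (by rw [h])
      rw [if_pos (Finset.mem_insert.mpr (Or.inr hiS))] at hi1
      by_contra hiT
      rw [if_neg (by simp [hiz, hiT])] at hi1
      norm_num at hi1
    · intro hiT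
      have hiz : i ≠ z := fun h => (Finset.mem_erase.mp (hT hiT)).1 (by rw [h])
      rw [if_pos (Finset.mem_insert.mpr (Or.inr hiT))] at hi1
      by_contra hiS
      rw [if_neg (by simp [hiz, hiS])] at hi1
      norm_num at hi1
  rw [hVeq, Finset.sum_image hinj]
  -- rewrite the sign condition
  have hcond : ∀ S ∈ U.powerset,
      (if 0 < ∑ i, g S i then (1:ℝ) else -1) • g S
        = (if k ≤ S.card then (1:ℝ) else -1) • g S := by
    intro S hS
    rw [Finset.mem_powerset] at hS
    rw [hsum S hS]
    congr 1
    have heq : (0 < 2 * (S.card:ℝ) + 2 - n) ↔ k ≤ S.card := by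
      have hn' : (n:ℝ) = 2*(k:ℝ)+1 := by rw [hk]; push_cast; ring
      rw [hn']
      constructor
      · intro h; by_contra hc; push_neg at hc
        have : (S.card:ℝ) + 1 ≤ k := by exact_mod_cast hc
        linarith
      · intro h
        have : (k:ℝ) ≤ S.card := by exact_mod_cast h
        linarith
    simp only [heq]
  rw [Finset.sum_congr rfl hcond]
  -- now compute coordinatewise
  funext j
  rw [Finset.sum_apply]
  have hn1 : n - 1 = 2 * k := by omega
  rw [hn1, show 2*k/2 = k from by omega]
  by_cases hj : j = z
  · -- coordinate zero
    subst hj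
    have : ∀ S ∈ U.powerset, ((if k ≤ S.card then (1:ℝ) else -1) • g S) z
        = (if k ≤ S.card then (1:ℝ) else -1) * 1 := by
      intro S _
      rw [Pi.smul_apply, smul_eq_mul]
      congr 1
      simp [hg]
    rw [Finset.sum_congr rfl this, Finset.sum_powerset]
    rw [hUcard]
    have : ∀ t ∈ Finset.range (2*k+1),
        ∑ S ∈ Finset.powersetCard t U, (if k ≤ S.card then (1:ℝ) else -1) * 1
          = (if k ≤ t then (1:ℝ) else -1) * ((2*k).choose t : ℝ) := by
      intro t ht
      have : ∀ S ∈ Finset.powersetCard t U, (if k ≤ S.card then (1:ℝ) else -1) * 1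
          = (if k ≤ t then (1:ℝ) else -1) := by
        intro S hS
        rw [(Finset.mem_powersetCard.mp hS).2, mul_one]
      rw [Finset.sum_congr rfl this, Finset.sum_const, Finset.card_powersetCard, hUcard,
        nsmul_eq_mul, mul_comm]
    rw [Finset.sum_congr rfl this, auxA_stmt11]
  · -- nonzero coordinate
    have hjU : j ∈ U := Finset.mem_erase.mpr ⟨hj, Finset.mem_univ j⟩
    have hjU' : j ∉ U.erase j := Finset.notMem_erase j U
    have hUins : U = insert j (U.erase j) := (Finset.insert_erase hjU).symm
    rw [hUins, Finset.sum_powerset_insert hjU']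
    have hterm : ∀ T ∈ (U.erase j).powerset,
        ((if k ≤ T.card then (1:ℝ) else -1) • g T) j
          + ((if k ≤ (insert j T).card then (1:ℝ) else -1) • g (insert j T)) j
        = (if T.card = k - 1 then (2:ℝ) else 0) := by
      intro T hT
      rw [Finset.mem_powerset] at hT
      have hjT : j ∉ T := fun h => hjU' (hT h)
      have hgT : g T j = -1 := by
        simp only [hg]
        rw [if_neg (by simp [hj, hjT])]
      have hgT' : g (insert j T) j = 1 := by
        simp only [hg]
        rw [if_pos (by simp)]
      rw [Pi.smul_apply, Pi.smul_apply, smul_eq_mul, smul_eq_mul, hgT, hgT',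
        Finset.card_insert_of_notMem hjT]
      rcases lt_trichotomy T.card (k-1) with h|h|h
      · rw [if_neg (by omega), if_neg (by omega), if_neg (by omega)]; ring
      · rw [if_neg (by omega), if_pos (by omega), if_pos h]; ring
      · rw [if_pos (by omega), if_pos (by omega), if_neg (by omega)]; ring
    rw [← Finset.sum_add_distrib, Finset.sum_congr rfl hterm, Finset.sum_powerset]
    have hcard' : (U.erase j).card = 2*k - 1 := by
      rw [Finset.card_erase_of_mem hjU, hUcard]
    rw [hcard']
    have : ∀ t ∈ Finset.range (2*k-1+1),
        ∑ S ∈ Finset.powersetCard t (U.erase j), (if S.card = k - 1 then (2:ℝ) else 0)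
          = (if t = k - 1 then (2:ℝ) else 0) * ((2*k-1).choose t : ℝ) := by
      intro t ht
      have : ∀ S ∈ Finset.powersetCard t (U.erase j),
          (if S.card = k - 1 then (2:ℝ) else 0) = (if t = k - 1 then (2:ℝ) else 0) := by
        intro S hS
        rw [(Finset.mem_powersetCard.mp hS).2]
      rw [Finset.sum_congr rfl this, Finset.sum_const, Finset.card_powersetCard, hcard',
        nsmul_eq_mul, mul_comm]
    rw [Finset.sum_congr rfl this]
    have hform : ∀ t ∈ Finset.range (2*k-1+1),
        (if t = k - 1 then (2:ℝ) else 0) * ((2*k-1).choose t : ℝ)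
          = (if t = k - 1 then (2:ℝ) * ((2*k-1).choose t : ℝ) else 0) := by
      intro t _; split_ifs <;> ring
    rw [Finset.sum_congr rfl hform]
    rw [Finset.sum_ite_eq' (Finset.range (2*k-1+1)) (k-1)
      (fun t => (2:ℝ) * ((2*k-1).choose t : ℝ)), if_pos (by simp; omega)]
    have hpascal : (2*k).choose k = (2*k-1).choose (k-1) + (2*k-1).choose k := by
      obtain ⟨m, rfl⟩ : ∃ m, k = m + 1 := ⟨k-1, by omega⟩
      rw [show 2*(m+1)-1 = 2*m+1 from by omega, show m+1-1 = m from by omega,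
        show 2*(m+1) = (2*m+1)+1 from by omega, Nat.choose_succ_succ]
    have hsymm2 : (2*k-1).choose k = (2*k-1).choose (k-1) := by
      have h := Nat.choose_symm (show k ≤ 2*k-1 by omega)
      rw [show 2*k-1-k = k-1 from by omega] at h
      exact h.symm
    rw [hpascal, hsymm2]
    push_cast
    ring
end

section
/- Let n be even, n ≥ 2, V = { v ∈ {-1,1}ⁿ : v₁ = 1 }, and V₀ = { v ∈ V : Σ_i v_i = 0 }. Define ε_v = 1 if Σ_i v_i > 0 and ε_v = -1 if Σ_i v_i < 0 for v ∈ V \ V₀. Then Σ_{v ∈ V\V₀} ε_v·v = C(n-1, n/2)·𝟏. -/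
open scoped Classical
open Finset

/-- sign weight: 1 if 2c < n, -1 if 2c > n, 0 if 2c = n -/
noncomputable def wfun (n c : ℕ) : ℝ := if 2*c < n then 1 else if n < 2*c then -1 else 0

lemma wfun_pair (n m c : ℕ) (hn : n = m + m) (h1 : 1 ≤ m) :
    wfun n c - wfun n (c+1) = (if c + 1 = m then (1:ℝ) else 0) + (if c = m then 1 else 0) := by
  subst hn
  unfold wfun
  split_ifs <;> first | (exfalso; omega) | norm_num

lemma wfun_compl (n m c : ℕ) (hn : n = m + m) (h1 : 1 ≤ m) (hc : c ≤ n - 1) :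
    wfun n c + wfun n (n - 1 - c)
      = (if c = m - 1 then (1:ℝ) else 0) + (if c = m then 1 else 0) := by
  subst hn
  unfold wfun
  split_ifs <;> first | (exfalso; omega) | norm_num

lemma count_powerset {α : Type*} [DecidableEq α] (Y : Finset α) (a : ℕ) :
    ∑ S ∈ Y.powerset, (if S.card = a then (1:ℝ) else 0) = (Y.card.choose a : ℝ) := by
  rw [Finset.sum_boole, ← Finset.powersetCard_eq_filter, Finset.card_powersetCard]

theorem stmt_12 (n : ℕ) (hn : 2 ≤ n) (hev : Even n) (V : Finset (Fin n → ℝ))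
    (hV : ∀ v : Fin n → ℝ, v ∈ V ↔ ((∀ i, v i = 1 ∨ v i = -1) ∧ v ⟨0, by omega⟩ = 1)) :
    ∑ v ∈ V \ V.filter (fun v => (∑ i, v i) = 0),
        (if 0 < ∑ i, v i then (1 : ℝ) else -1) • v =
      fun _ => ((n - 1).choose (n / 2) : ℝ) := by
  obtain ⟨m, hm⟩ := hev
  have hm1 : 1 ≤ m := by omega
  have hpos : 0 < n := by omega
  set z : Fin n := ⟨0, hpos⟩ with hzdef
  have hVz : ∀ v : Fin n → ℝ, v ∈ V ↔ ((∀ i, v i = 1 ∨ v i = -1) ∧ v z = 1) := hV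
  set X : Finset (Fin n) := Finset.univ.erase z with hXdef
  have hzX : z ∉ X := Finset.notMem_erase z _
  have hXcard : X.card = n - 1 := by
    rw [hXdef, card_erase_of_mem (mem_univ z), card_univ, Fintype.card_fin]
  set f : Finset (Fin n) → (Fin n → ℝ) := fun S i => if i ∈ S then (-1:ℝ) else 1 with hfdef
  -- sum of coordinates of f S
  have hsumf : ∀ S : Finset (Fin n), (∑ i, f S i) = (n:ℝ) - 2 * S.card := by
    intro S
    have h1 : ∀ i, f S i = 1 - (if i ∈ S then (2:ℝ) else 0) := by
      intro i; simp only [hfdef]; split <;> norm_num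
    calc (∑ i, f S i) = ∑ i : Fin n, (1 - (if i ∈ S then (2:ℝ) else 0)) :=
          Finset.sum_congr rfl (fun i _ => h1 i)
      _ = (n:ℝ) - 2 * S.card := by
          rw [Finset.sum_sub_distrib, Finset.sum_const, Finset.sum_ite_mem,
            Finset.univ_inter, Finset.sum_const]
          simp [mul_comm]
  -- injectivity of f
  have hinj : Function.Injective f := by
    intro S T h
    ext i
    have := congrFun h i
    simp only [hfdef] at this
    by_cases hiS : i ∈ S <;> by_cases hiT : i ∈ T <;>
      simp [hiS, hiT] at this ⊢ <;> norm_num at this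
  -- the summation domain as an image
  have hA : V \ V.filter (fun v => (∑ i, v i) = 0)
      = (X.powerset.filter (fun S => 2 * S.card ≠ n)).image f := by
    ext v
    simp only [Finset.mem_sdiff, Finset.mem_filter, Finset.mem_image, Finset.mem_powerset,
      hVz, not_and]
    constructor
    · rintro ⟨⟨hpm, hz1⟩, hnot⟩
      have hnot' : (∑ i, v i) ≠ 0 := fun h => hnot ⟨hpm, hz1⟩ h
      refine ⟨Finset.univ.filter (fun i => v i = -1), ⟨?_, ?_⟩, ?_⟩
      · intro i hi
        simp only [Finset.mem_filter] at hi
        rw [hXdef]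
        refine Finset.mem_erase.2 ⟨?_, Finset.mem_univ i⟩
        intro hiz
        rw [hiz, hz1] at hi
        norm_num at hi
      · -- cardinality condition
        have hfv : f (Finset.univ.filter (fun i => v i = -1)) = v := by
          funext i
          simp only [hfdef, Finset.mem_filter, Finset.mem_univ, true_and]
          rcases hpm i with h | h <;> simp [h] <;> norm_num
        intro hcard
        apply hnot'
        rw [← hfv, hsumf, sub_eq_zero]
        exact_mod_cast hcard.symm
      · funext i
        simp only [hfdef, Finset.mem_filter, Finset.mem_univ, true_and]
        rcases hpm i with h | h <;> simp [h] <;> norm_num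
    · rintro ⟨S, ⟨hSX, hScard⟩, rfl⟩
      have hzS : z ∉ S := fun h => hzX (hSX h)
      refine ⟨⟨fun i => ?_, ?_⟩, fun _ h => ?_⟩
      · simp only [hfdef]; split <;> simp
      · simp [hfdef, hzS]
      · rw [hsumf, sub_eq_zero] at h
        exact hScard (by exact_mod_cast h.symm)
  -- main computation
  funext i
  rw [Finset.sum_apply, hA, Finset.sum_image (fun x _ y _ h => hinj h)]
  -- convert to wfun-weighted sum over the full powerset
  have hstep : ∑ S ∈ X.powerset.filter (fun S => 2 * S.card ≠ n),
      ((if 0 < ∑ j, f S j then (1:ℝ) else -1) • f S) i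
      = ∑ S ∈ X.powerset, wfun n S.card * f S i := by
    rw [Finset.sum_filter]
    refine Finset.sum_congr rfl (fun S hS => ?_)
    simp only [Pi.smul_apply, smul_eq_mul, hsumf]
    have hlt : (0:ℝ) < (n:ℝ) - 2 * S.card ↔ 2 * S.card < n := by
      rw [sub_pos]; exact_mod_cast Iff.rfl
    by_cases hne : 2 * S.card ≠ n
    · simp only [hne, if_true, ne_eq, not_false_eq_true]
      unfold wfun
      by_cases h2 : 2 * S.card < n
      · rw [if_pos (hlt.2 h2), if_pos h2]
      · rw [if_neg (fun h => h2 (hlt.1 h)), if_neg h2, if_pos (by omega)]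
    · simp only [ne_eq, not_not] at hne
      simp only [hne, ne_eq, not_true_eq_false, if_false]
      unfold wfun
      rw [if_neg (by omega), if_neg (by omega)]
      ring
  rw [hstep]
  have hchoose : (n - 1).choose (n / 2) = (n-2).choose (m-1) + (n-2).choose m := by
    have h1 : n - 1 = (n-2) + 1 := by omega
    have h2 : n / 2 = (m - 1) + 1 := by omega
    rw [h1, h2, Nat.choose_succ_succ, show (m-1).succ = m by omega]
  by_cases hiz : i = z
  · -- coordinate 0 : f S i = 1 always
    subst hiz
    have hone : ∀ S ∈ X.powerset, wfun n S.card * f S z = wfun n S.card := by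
      intro S hS
      have : z ∉ S := fun h => hzX (Finset.mem_powerset.1 hS h)
      simp [hfdef, this]
    rw [Finset.sum_congr rfl hone]
    -- complement bijection
    have himg : X.powerset.image (fun S => X \ S) = X.powerset := by
      ext T
      simp only [Finset.mem_image, Finset.mem_powerset]
      constructor
      · rintro ⟨S, hS, rfl⟩; exact Finset.sdiff_subset
      · intro hT; exact ⟨X \ T, Finset.sdiff_subset, Finset.sdiff_sdiff_eq_self hT⟩
    have hrev : ∑ S ∈ X.powerset, wfun n S.card
        = ∑ S ∈ X.powerset, wfun n (n - 1 - S.card) := by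
      conv_lhs => rw [← himg]
      rw [Finset.sum_image]
      · refine Finset.sum_congr rfl (fun S hS => ?_)
        rw [Finset.card_sdiff_of_subset (Finset.mem_powerset.1 hS), hXcard]
      · intro x hx y hy h
        have := congrArg (fun T => X \ T) h
        simp only at this
        rwa [Finset.sdiff_sdiff_eq_self (Finset.mem_powerset.1 hx),
          Finset.sdiff_sdiff_eq_self (Finset.mem_powerset.1 hy)] at this
    have hdbl : (∑ S ∈ X.powerset, wfun n S.card) + (∑ S ∈ X.powerset, wfun n S.card)
        = ((n-1).choose (m-1) : ℝ) + ((n-1).choose m : ℝ) := by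
      nth_rewrite 1 [hrev]
      rw [← Finset.sum_add_distrib]
      have : ∀ S ∈ X.powerset, wfun n (n - 1 - S.card) + wfun n S.card
          = (if S.card = m - 1 then (1:ℝ) else 0) + (if S.card = m then 1 else 0) := by
        intro S hS
        have hc : S.card ≤ n - 1 := hXcard ▸ Finset.card_le_card (Finset.mem_powerset.1 hS)
        rw [add_comm]
        exact wfun_compl n m S.card hm hm1 hc
      rw [Finset.sum_congr rfl this, Finset.sum_add_distrib, count_powerset, count_powerset,
        hXcard]
    have hsymm : (n-1).choose (m-1) = (n-1).choose m := by
      have h : m - 1 = (n - 1) - m := by omega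
      rw [h, Nat.choose_symm (by omega)]
    have hnm : n / 2 = m := by omega
    rw [hnm] at *
    rw [hsymm] at hdbl
    linarith
  · -- coordinate i ≠ 0
    have hiX : i ∈ X := by
      rw [hXdef]; exact Finset.mem_erase.2 ⟨hiz, Finset.mem_univ i⟩
    have hXins : X = insert i (X.erase i) := (Finset.insert_erase hiX).symm
    rw [hXins, Finset.sum_powerset_insert (Finset.notMem_erase i X)]
    have hYcard : (X.erase i).card = n - 2 := by
      rw [Finset.card_erase_of_mem hiX, hXcard]; omega
    have hterm : ∀ S ∈ (X.erase i).powerset,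
        wfun n S.card * f S i + wfun n (insert i S).card * f (insert i S) i
        = (if S.card + 1 = m then (1:ℝ) else 0) + (if S.card = m then 1 else 0) := by
      intro S hS
      have hiS : i ∉ S := fun h => Finset.notMem_erase i X (Finset.mem_powerset.1 hS h)
      have h1 : f S i = 1 := by simp [hfdef, hiS]
      have h2 : f (insert i S) i = -1 := by simp [hfdef]
      rw [h1, h2, Finset.card_insert_of_notMem hiS, mul_one, mul_neg_one,
        ← sub_eq_add_neg]
      exact wfun_pair n m S.card hm hm1
    rw [← Finset.sum_add_distrib, Finset.sum_congr rfl hterm, Finset.sum_add_distrib]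
    have c1 : ∑ S ∈ (X.erase i).powerset, (if S.card + 1 = m then (1:ℝ) else 0)
        = ((n-2).choose (m-1) : ℝ) := by
      have : ∀ S : Finset (Fin n), (S.card + 1 = m) ↔ (S.card = m - 1) := by
        intro S; omega
      simp only [this]
      rw [count_powerset, hYcard]
    have c2 : ∑ S ∈ (X.erase i).powerset, (if S.card = m then (1:ℝ) else 0)
        = ((n-2).choose m : ℝ) := by rw [count_powerset, hYcard]
    rw [c1, c2, hchoose]
    have hnm : n / 2 = m := by omega
    push_cast
    ring
end

section
/- Let n be even, not a power of 2. Then there exist signs ε_v ∈ {-1,1} for each v ∈ V₀ = { v ∈ {-1,1}ⁿ : v₁ = 1, Σ_i v_i = 0 } such that Σ_{v∈V₀} ε_v·v = 0. -/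
/-!
Index the coordinates other than the first by a cyclic group `G` of order `n - 1`. Translation
by `G` permutes `V₀`, and it acts freely: a vector of `V₀` has `n / 2 - 1` entries `+1` among
those `n - 1` coordinates, and a translate-invariant set of that size forces the translation to be
killed by `n / 2 - 1`, which is prime to `n - 1`. Hence every orbit has `n - 1` elements and the
same sum `(n - 1, -1, …, -1)`. The number of orbits `C(n - 1, n / 2 - 1) / (n - 1)` is even by
Kummer's theorem when `n / 2` is not a power of two, so signing half of the orbits `+1` and the
other half `-1` makes everything cancel.
-/

open Finset

theorem two_dvd_choose_two_mul_add_one {c : ℕ} (hc : ∀ k, c + 1 ≠ 2 ^ k) :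
    2 ∣ (2 * c + 1).choose c := by
  set j := Nat.log 2 (c + 1)
  have hlow : 2 ^ j < c + 1 := (Nat.pow_log_le_self 2 (by omega)).lt_of_ne (hc j).symm
  have hhigh : c + 1 < 2 ^ (j + 1) := Nat.lt_pow_succ_log_self (by norm_num) _
  have hlog : Nat.log 2 (c + 1 + c) < j + 2 :=
    Nat.log_lt_of_lt_pow (by omega) (by rw [pow_succ]; omega)
  -- adding `c` and `c + 1` in base 2 carries into digit `j + 1`
  have hcarry : j + 1 ∈ {i ∈ Ico 1 (j + 2) | 2 ^ i ≤ c % 2 ^ i + (c + 1) % 2 ^ i} := by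
    rw [mem_filter, Nat.mod_eq_of_lt (by omega), Nat.mod_eq_of_lt hhigh, pow_succ]
    simp only [mem_Ico]
    omega
  have hmult : 1 ≤ emultiplicity 2 ((2 * c + 1).choose c) := by
    rw [show 2 * c + 1 = c + 1 + c by ring, Nat.prime_two.emultiplicity_choose' hlog]
    exact_mod_cast card_pos.2 ⟨_, hcarry⟩
  simpa using pow_dvd_of_le_emultiplicity hmult

theorem exists_sign_sum_smul_eq_zero {α β R M : Type*} [DecidableEq β] [Ring R]
    [AddCommGroup M] [Module R M] (s : Finset α) (f : α → β) (v : α → M) (u : M)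
    (hfiber : ∀ b ∈ s.image f, ∑ a ∈ s with f a = b, v a = u) (heven : Even #(s.image f)) :
    ∃ ε : α → R, (∀ a ∈ s, ε a = 1 ∨ ε a = -1) ∧ ∑ a ∈ s, ε a • v a = 0 := by
  obtain ⟨T, hT, hTcard⟩ := exists_subset_card_eq (Nat.div_le_self #(s.image f) 2)
  have hbalance : ∑ b ∈ s.image f, (if b ∈ T then (1 : R) else -1) = 0 := by
    have hsplit := card_filter_add_card_filter_not (s := s.image f) (· ∈ T)
    rw [filter_mem_eq_inter, inter_eq_right.2 hT] at hsplit
    obtain ⟨r, hr⟩ := heven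
    rw [sum_ite, filter_mem_eq_inter, inter_eq_right.2 hT, sum_const, sum_const,
      show #{b ∈ s.image f | b ∉ T} = #T by omega]
    simp
  refine ⟨fun a => if f a ∈ T then 1 else -1, fun a _ => by dsimp only; split_ifs <;> simp, ?_⟩
  calc ∑ a ∈ s, (if f a ∈ T then (1 : R) else -1) • v a
      = ∑ b ∈ s.image f, ∑ a ∈ s with f a = b, (if b ∈ T then (1 : R) else -1) • v a := by
        rw [← sum_fiberwise_of_maps_to fun a ha => mem_image_of_mem f ha]
        refine sum_congr rfl fun b _ => sum_congr rfl fun a ha => ?_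
        rw [(mem_filter.1 ha).2]
    _ = (∑ b ∈ s.image f, if b ∈ T then (1 : R) else -1) • u := by
        rw [sum_smul]
        exact sum_congr rfl fun b hb => by rw [← smul_sum, hfiber b hb]
    _ = 0 := by rw [hbalance, zero_smul]

theorem card_filter_nsmul_eq_zero {G : Type*} [AddCommGroup G] [Fintype G] (p : G → Prop)
    [DecidablePred p] {k : G} (hk : ∀ x, p (x + k) ↔ p x) : #{x | p x} • k = 0 := by
  have h : ∑ x with p x, (x + k) = ∑ x with p x, x :=
    sum_nbij' (· + k) (· - k) (by simp [hk]) (fun x hx => by simpa [← hk (x - k)] using hx)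
      (by simp) (by simp) (by simp)
  rwa [sum_add_distrib, sum_const, add_eq_left] at h

theorem sum_eq_two_mul_card_filter_sub_card {α : Type*} (s : Finset α) (w : α → ℝ)
    (hw : ∀ a ∈ s, w a = 1 ∨ w a = -1) : ∑ a ∈ s, w a = 2 * #{a ∈ s | w a = 1} - #s := by
  have hneg : ∀ a ∈ s.filter (w · ≠ 1), w a = -1 := fun a ha =>
    (hw a (mem_filter.1 ha).1).resolve_left (mem_filter.1 ha).2
  rw [← sum_filter_add_sum_filter_not s (w · = 1), sum_congr rfl fun a ha => (mem_filter.1 ha).2,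
    sum_congr rfl hneg, ← card_filter_add_card_filter_not (s := s) (w · = 1)]
  simp only [sum_const, nsmul_eq_mul, mul_one, Nat.cast_add]
  ring

theorem Equiv.sum_eq_add_sum_some {α ι M : Type*} [Fintype α] [Fintype ι] [AddCommMonoid M]
    (e : ι ≃ Option α) (w : ι → M) : ∑ i, w i = w (e.symm none) + ∑ x, w (e.symm (some x)) := by
  rw [← e.symm.sum_comp, Fintype.sum_option]

section Balanced

variable {G ι : Type*} [Fintype G] [Fintype ι] (e : ι ≃ Option G)

def IsBalancedSign (v : ι → ℝ) : Prop :=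
  (∀ i, v i = 1 ∨ v i = -1) ∧ v (e.symm none) = 1 ∧ ∑ i, v i = 0

noncomputable def plusSet (v : ι → ℝ) : Finset G := {x | v (e.symm (some x)) = 1}

def signVector [DecidableEq G] (A : Finset G) (i : ι) : ℝ :=
  (e i).elim 1 fun x => if x ∈ A then 1 else -1

variable {e}

theorem IsBalancedSign.sum_some {v : ι → ℝ} (hv : IsBalancedSign e v) :
    ∑ x, v (e.symm (some x)) = -1 := by
  linarith [e.sum_eq_add_sum_some v, hv.2.1, hv.2.2]

theorem IsBalancedSign.two_mul_card_plusSet_add_one {v : ι → ℝ} (hv : IsBalancedSign e v) :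
    2 * #(plusSet e v) + 1 = Fintype.card G := by
  have h := sum_eq_two_mul_card_filter_sub_card univ (fun x => v (e.symm (some x)))
    fun x _ => hv.1 _
  rw [hv.sum_some, card_univ] at h
  have : (2 * #(plusSet e v) + 1 : ℝ) = Fintype.card G := by unfold plusSet; linarith
  exact_mod_cast this

theorem isBalancedSign_signVector [DecidableEq G] {A : Finset G}
    (hA : 2 * #A + 1 = Fintype.card G) : IsBalancedSign e (signVector e A) := by
  have hsome (x : G) : signVector e A (e.symm (some x)) = if x ∈ A then 1 else -1 := by
    simp [signVector]
  have hsign (x : G) : signVector e A (e.symm (some x)) = 1 ∨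
      signVector e A (e.symm (some x)) = -1 := by
    rw [hsome]; split_ifs <;> simp
  refine ⟨fun i => ?_, by simp [signVector], ?_⟩
  · obtain ⟨o, rfl⟩ := e.symm.surjective i
    cases o with
    | none => simp [signVector]
    | some x => exact hsign x
  · rw [e.sum_eq_add_sum_some, sum_eq_two_mul_card_filter_sub_card univ _ fun x _ => hsign x]
    norm_num [hsome, ← hA, signVector]

theorem card_eq_choose_of_mem_iff_isBalancedSign [DecidableEq G] {s : Finset (ι → ℝ)}
    (hs : ∀ v, v ∈ s ↔ IsBalancedSign e v) {c : ℕ} (hc : 2 * c + 1 = Fintype.card G) :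
    #s = (Fintype.card G).choose c := by
  rw [← card_univ (α := G), ← card_powersetCard]
  refine card_nbij' (plusSet e) (signVector e) (fun v hv => ?_) (fun A hA => ?_)
    (fun v hv => ?_) (fun A _ => ?_)
  · have := ((hs v).1 hv).two_mul_card_plusSet_add_one
    simp only [mem_coe, mem_powersetCard, subset_univ, true_and]
    omega
  · simp only [mem_coe, mem_powersetCard, subset_univ, true_and] at hA
    exact (hs _).2 (isBalancedSign_signVector (by omega))
  · have hv := (hs v).1 hv
    ext i
    obtain ⟨o, rfl⟩ := e.symm.surjective i
    cases o with
    | none => simp [signVector, hv.2.1]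
    | some x =>
      simp only [signVector, Equiv.apply_symm_apply, Option.elim, plusSet, mem_filter, mem_univ,
        true_and]
      rcases hv.1 (e.symm (some x)) with h | h <;> norm_num [h]
  · ext x
    norm_num [plusSet, signVector]

end Balanced

section Rotation

variable {G ι : Type*} [AddCommGroup G] (e : ι ≃ Option G)

def rotate (k : G) : Equiv.Perm ι := e.trans ((Equiv.addRight k).optionCongr.trans e.symm)

def shift (k : G) (v : ι → ℝ) : ι → ℝ := v ∘ rotate e k

theorem rotate_symm_none (k : G) : rotate e k (e.symm none) = e.symm none := by
  simp [rotate]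

theorem rotate_symm_some (k x : G) : rotate e k (e.symm (some x)) = e.symm (some (x + k)) := by
  simp [rotate]

theorem shift_zero (v : ι → ℝ) : shift e 0 v = v := by
  ext i
  simp [shift, rotate]

theorem shift_shift (k l : G) (v : ι → ℝ) : shift e k (shift e l v) = shift e (k + l) v := by
  ext i
  cases h : e i <;> simp [shift, rotate, h, add_comm k, add_assoc]

variable [Fintype ι] {e}

theorem isBalancedSign_shift {v : ι → ℝ} (hv : IsBalancedSign e v) (k : G) :
    IsBalancedSign e (shift e k v) :=
  ⟨fun i => hv.1 _, by rw [shift, Function.comp_apply, rotate_symm_none, hv.2.1],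
    by simp only [shift, Function.comp_apply]; rw [Equiv.sum_comp (rotate e k) v, hv.2.2]⟩

variable [Fintype G]

variable (e) in
noncomputable def orbit (v : ι → ℝ) : Finset (ι → ℝ) := univ.image (shift e · v)

theorem IsBalancedSign.eq_zero_of_shift_eq {v : ι → ℝ} (hv : IsBalancedSign e v) {k : G}
    (h : shift e k v = v) : k = 0 := by
  have hinv (x : G) : v (e.symm (some (x + k))) = 1 ↔ v (e.symm (some x)) = 1 := by
    rw [← rotate_symm_some, ← Function.comp_apply (f := v), ← shift, h]
  have hS : #(plusSet e v) • k = 0 := card_filter_nsmul_eq_zero _ hinv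
  have hcop : Nat.Coprime #(plusSet e v) (Fintype.card G) := by
    rw [← hv.two_mul_card_plusSet_add_one]
    simp
  exact (nsmul_eq_zero_iff_of_coprime hcop).1 ⟨hS, card_nsmul_eq_zero⟩

theorem IsBalancedSign.shift_injective {v : ι → ℝ} (hv : IsBalancedSign e v) :
    Function.Injective (shift e · v) := fun k l h => by
  have h' := congrArg (shift e (-l)) h
  simp only [shift_shift, neg_add_cancel, shift_zero] at h'
  simpa [neg_add_eq_sub, sub_eq_zero] using hv.eq_zero_of_shift_eq h'

theorem IsBalancedSign.sum_shift {v : ι → ℝ} (hv : IsBalancedSign e v) :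
    ∑ k, shift e k v = fun i => (e i).elim (Fintype.card G : ℝ) fun _ => -1 := by
  ext i
  rw [Finset.sum_apply]
  obtain ⟨o, rfl⟩ := e.symm.surjective i
  cases o with
  | none => simp [shift, rotate_symm_none, hv.2.1]
  | some x =>
    simp only [shift, Function.comp_apply, rotate_symm_some, Equiv.apply_symm_apply, Option.elim]
    rw [← hv.sum_some]
    exact Fintype.sum_equiv (Equiv.addLeft x) _ _ fun _ => rfl

theorem mem_orbit {v w : ι → ℝ} : w ∈ orbit e v ↔ ∃ k, shift e k v = w := by
  simp [orbit]

theorem orbit_shift (k : G) (v : ι → ℝ) : orbit e (shift e k v) = orbit e v := by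
  ext w
  simp only [mem_orbit, shift_shift]
  exact ⟨fun ⟨l, hl⟩ => ⟨l + k, hl⟩, fun ⟨l, hl⟩ => ⟨l - k, by rw [sub_add_cancel, hl]⟩⟩

theorem IsBalancedSign.sum_orbit {v : ι → ℝ} (hv : IsBalancedSign e v) :
    ∑ w ∈ orbit e v, w = fun i => (e i).elim (Fintype.card G : ℝ) fun _ => -1 := by
  rw [orbit, sum_image fun k _ l _ h => hv.shift_injective h, hv.sum_shift]

theorem IsBalancedSign.card_orbit {v : ι → ℝ} (hv : IsBalancedSign e v) :
    #(orbit e v) = Fintype.card G := by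
  rw [orbit, card_image_of_injective _ hv.shift_injective, card_univ]

theorem filter_orbit_eq {s : Finset (ι → ℝ)} (hs : ∀ v, v ∈ s ↔ IsBalancedSign e v)
    {v : ι → ℝ} (hv : v ∈ s) : {w ∈ s | orbit e w = orbit e v} = orbit e v := by
  ext w
  simp only [mem_filter]
  constructor
  · rintro ⟨-, hw⟩
    exact hw ▸ mem_orbit.2 ⟨0, shift_zero e w⟩
  · intro hw
    obtain ⟨k, rfl⟩ := mem_orbit.1 hw
    exact ⟨(hs _).2 (isBalancedSign_shift ((hs v).1 hv) k), orbit_shift k v⟩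

theorem card_eq_card_image_orbit_mul {s : Finset (ι → ℝ)}
    (hs : ∀ v, v ∈ s ↔ IsBalancedSign e v) : #s = #(s.image (orbit e)) * Fintype.card G := by
  rw [card_eq_sum_card_image (orbit e) s, sum_const_nat]
  simp only [mem_image]
  rintro _ ⟨v, hv, rfl⟩
  rw [filter_orbit_eq hs hv, ((hs v).1 hv).card_orbit]

theorem sum_filter_orbit_eq {s : Finset (ι → ℝ)} (hs : ∀ v, v ∈ s ↔ IsBalancedSign e v) :
    ∀ b ∈ s.image (orbit e), ∑ w ∈ s with orbit e w = b, w =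
      fun i => (e i).elim (Fintype.card G : ℝ) fun _ => -1 := by
  simp only [mem_image]
  rintro _ ⟨v, hv, rfl⟩
  rw [filter_orbit_eq hs hv, ((hs v).1 hv).sum_orbit]

end Rotation

theorem stmt_15 (n : ℕ) (hn : 0 < n) (hev : Even n) (hnp : ¬ ∃ k : ℕ, n = 2 ^ k)
    (V₀ : Finset (Fin n → ℝ))
    (hV₀ : ∀ v : Fin n → ℝ,
      v ∈ V₀ ↔ ((∀ i, v i = 1 ∨ v i = -1) ∧ v ⟨0, by omega⟩ = 1 ∧ (∑ i, v i) = 0)) :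
    ∃ ε : (Fin n → ℝ) → ℝ, (∀ v ∈ V₀, ε v = 1 ∨ ε v = -1) ∧
      ∑ v ∈ V₀, ε v • v = 0 := by
  obtain ⟨c, rfl⟩ : ∃ c, n = 2 * c + 2 := by
    obtain ⟨r, rfl⟩ := hev
    exact ⟨r - 1, by omega⟩
  have hc : ∀ k, c + 1 ≠ 2 ^ k := fun k hk => hnp ⟨k + 1, by rw [pow_succ]; omega⟩
  have hs : ∀ v, v ∈ V₀ ↔ IsBalancedSign (finSuccEquiv (2 * c + 1)) v := by
    simpa [IsBalancedSign] using hV₀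
  have hcard : 2 * c + 1 = Fintype.card (Fin (2 * c + 1)) := (Fintype.card_fin _).symm
  have heven : Even #(V₀.image (orbit (finSuccEquiv (2 * c + 1)))) := by
    have h := card_eq_card_image_orbit_mul hs
    rw [card_eq_choose_of_mem_iff_isBalancedSign hs hcard, ← hcard] at h
    have h2 := two_dvd_choose_two_mul_add_one hc
    rw [h, ← even_iff_two_dvd, Nat.even_mul] at h2
    exact h2.resolve_right (by simp [parity_simps])
  exact exists_sign_sum_smul_eq_zero V₀ _ id _ (sum_filter_orbit_eq hs) heven
end

section
/- Let m ≥ 2 be an integer that is not a power of 2. Then there is a 2-coloring (Red/Blue) of the m-element subsets of a 2m-element set such that (i) complementary m-sets receive distinct colors, and (ii) every point of the 2m-set is contained in equally many Red and Blue m-sets. -/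
/-!
Let `p` be an odd prime dividing `m`, and sort the points of `ℤ/2m` into the `p` residue classes
mod `p`. Call a set balanced if it meets every class in as many points as its complement does.

An unbalanced set `A` is never a translate `s + A` of its complement: otherwise its class counts
would be antiperiodic with period `s`, hence periodic with period `2s`, hence (as `p` is odd)
periodic with period `s`, which forces balance. So colouring an unbalanced `A` by comparing the
translation orbits of `A` and `Aᶜ` in some well-order gives a translation-invariant colouring that
complementation swaps, and then every point lies in half of the red and half of the blue
unbalanced `m`-sets.

A balanced set is coloured by the parity of its intersection with a transversal of the classes.
Complementation flips this parity since `p` is odd, and so does toggling a whole class; toggling a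
class that avoids a given point `i` pairs the red and blue balanced `m`-sets through `i`.
-/

open Finset Function
open scoped Pointwise symmDiff

namespace HalfSetColoring

variable {G H : Type*} [DecidableEq G]

section Parity

variable [Fintype H] (σ : H → G)

def parity (A : Finset G) : ZMod 2 :=
  ∑ h, if σ h ∈ A then 1 else 0

lemma parity_compl [Fintype G] (hH : Odd (Fintype.card H)) (A : Finset G) :
    parity σ Aᶜ = parity σ A + 1 := by
  have hterm : ∀ h, (if σ h ∈ Aᶜ then (1 : ZMod 2) else 0) = (if σ h ∈ A then 1 else 0) + 1 := by
    intro h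
    simp only [mem_compl]
    split_ifs <;> tauto
  simp only [parity, hterm, sum_add_distrib, sum_const, card_univ, nsmul_eq_mul, mul_one,
    hH.natCast_zmod_two]

lemma decide_add_one_eq_one (x : ZMod 2) : decide (x + 1 = 1) = !decide (x = 1) := by
  revert x; decide

end Parity

variable [AddCommGroup G]

lemma card_filter_mem_eq_of_vadd_mem {F : Finset (Finset G)}
    (hF : ∀ g : G, ∀ A ∈ F, g +ᵥ A ∈ F) (i j : G) : #{A ∈ F | i ∈ A} = #{A ∈ F | j ∈ A} := by
  have hmaps : ∀ i j : G, ∀ A ∈ {A ∈ F | i ∈ A}, (j - i) +ᵥ A ∈ {A ∈ F | j ∈ A} := by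
    intro i j A hA
    rw [mem_filter] at hA ⊢
    refine ⟨hF _ _ hA.1, ?_⟩
    simpa [vadd_eq_add] using vadd_mem_vadd_finset (a := j - i) hA.2
  have hinv : ∀ i j : G, ∀ A : Finset G, (i - j) +ᵥ ((j - i) +ᵥ A) = A := by
    intro i j A
    rw [vadd_vadd, show i - j + (j - i) = 0 by abel, zero_vadd]
  exact card_nbij' _ _ (hmaps i j) (hmaps j i) (fun A _ => hinv i j A) (fun A _ => hinv j i A)

variable [AddCommGroup H] [DecidableEq H]

lemma card_filter_vadd (π : G →+ H) (g : G) (A : Finset G) (h : H) :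
    #{a ∈ g +ᵥ A | π a = π g + h} = #{a ∈ A | π a = h} := by
  rw [← image_vadd, filter_image, card_image_of_injective _ (AddAction.injective g)]
  simp only [vadd_eq_add, map_add, add_right_inj]

variable [Fintype G]

lemma vadd_finset_compl (g : G) (A : Finset G) : g +ᵥ Aᶜ = (g +ᵥ A)ᶜ := by
  rw [compl_eq_univ_sdiff, vadd_finset_sdiff, vadd_finset_univ, ← compl_eq_univ_sdiff]

lemma two_mul_card_filter_mem {m : ℕ} (hG : Fintype.card G = 2 * m) {F : Finset (Finset G)}
    (hF : ∀ g : G, ∀ A ∈ F, g +ᵥ A ∈ F) (hFm : ∀ A ∈ F, #A = m) (i : G) :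
    2 * #{A ∈ F | i ∈ A} = #F := by
  have hsum := sum_card (B := F) fun j => card_filter_mem_eq_of_vadd_mem hF j i
  rw [sum_congr rfl hFm, sum_const, smul_eq_mul, hG] at hsum
  have hm : 0 < m := by have := Fintype.card_pos (α := G); omega
  exact Nat.eq_of_mul_eq_mul_right hm (by linarith)

section Balanced

variable (π : G →+ H)

def fiber (t : H) : Finset G := {a | π a = t}

def IsBalanced (A : Finset G) : Prop :=
  ∀ h, #{a ∈ A | π a = h} = #{a ∈ Aᶜ | π a = h}

instance [Fintype H] : DecidablePred (IsBalanced π) :=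
  fun _ => Fintype.decidableForallFintype

variable {π}

lemma isBalanced_compl_iff {A : Finset G} : IsBalanced π Aᶜ ↔ IsBalanced π A := by
  simp only [IsBalanced, compl_compl, eq_comm]

lemma IsBalanced.vadd {A : Finset G} (hA : IsBalanced π A) (g : G) :
    IsBalanced π (g +ᵥ A) := by
  intro h
  obtain ⟨k, rfl⟩ : ∃ k, h = π g + k := ⟨h - π g, by abel⟩
  rw [← vadd_finset_compl, card_filter_vadd, card_filter_vadd]
  exact hA k

lemma isBalanced_vadd_iff (g : G) {A : Finset G} :
    IsBalanced π (g +ᵥ A) ↔ IsBalanced π A :=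
  ⟨fun hA => neg_vadd_vadd g A ▸ hA.vadd (-g), fun hA => hA.vadd g⟩

lemma isBalanced_of_vadd_eq_compl [Fintype H] (hH : Odd (Fintype.card H)) {A : Finset G}
    {g : G} (hA : g +ᵥ A = Aᶜ) : IsBalanced π A := by
  have hcompl : ∀ h, #{a ∈ Aᶜ | π a = π g + h} = #{a ∈ A | π a = h} := fun h => by
    rw [← hA, card_filter_vadd]
  have hself : ∀ h, #{a ∈ A | π a = π g + h} = #{a ∈ Aᶜ | π a = h} := fun h => by
    rw [← card_filter_vadd π g Aᶜ, vadd_finset_compl, hA, compl_compl]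
  have hper : Periodic (fun h => #{a ∈ A | π a = h}) (π g + π g) := fun h => by
    dsimp only
    rw [show h + (π g + π g) = π g + (π g + h) by abel, hself, hcompl]
  obtain ⟨k, hk⟩ := hH
  have hs : (k + 1) • (π g + π g) = π g := by
    have hord : (2 * k + 1) • π g = 0 := hk ▸ card_nsmul_eq_zero
    rw [show (k + 1) • (π g + π g) = (2 * k + 1) • π g + π g by module, hord, zero_add]
  intro h
  rw [← hself, add_comm]
  exact ((hs ▸ hper.nsmul (k + 1)) h).symm

lemma filter_symmDiff_fiber (A : Finset G) (t h : H) :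
    {a ∈ A ∆ fiber π t | π a = h} =
      if h = t then {a ∈ Aᶜ | π a = h} else {a ∈ A | π a = h} := by
  ext a
  split_ifs with hht <;>
    simp only [fiber, mem_filter, mem_symmDiff, mem_compl, mem_univ, true_and] <;>
    grind

lemma IsBalanced.symmDiff_fiber {A : Finset G} (hA : IsBalanced π A) (t : H) :
    IsBalanced π (A ∆ fiber π t) := by
  have hcompl : (A ∆ fiber π t)ᶜ = Aᶜ ∆ fiber π t := by
    ext a; simp only [mem_compl, mem_symmDiff]; tauto
  intro h
  rw [hcompl, filter_symmDiff_fiber, filter_symmDiff_fiber, compl_compl]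
  split_ifs
  exacts [(hA h).symm, hA h]

lemma IsBalanced.card_symmDiff_fiber [Fintype H] {A : Finset G} (hA : IsBalanced π A) (t : H) :
    #(A ∆ fiber π t) = #A := by
  rw [card_eq_sum_card_fiberwise (f := π) (t := univ) (fun _ _ => mem_univ _),
    card_eq_sum_card_fiberwise (s := A) (f := π) (t := univ) (fun _ _ => mem_univ _)]
  refine sum_congr rfl fun h _ => ?_
  rw [filter_symmDiff_fiber]
  split_ifs
  exacts [(hA h).symm, rfl]

lemma parity_symmDiff_fiber [Fintype H] {σ : H → G} (hσ : LeftInverse π σ) (A : Finset G)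
    (t : H) : parity σ (A ∆ fiber π t) = parity σ A + 1 := by
  have hterm : ∀ h, (if σ h ∈ A ∆ fiber π t then (1 : ZMod 2) else 0) =
      (if σ h ∈ A then 1 else 0) + if h = t then 1 else 0 := by
    intro h
    simp only [fiber, mem_symmDiff, mem_filter, mem_univ, true_and, hσ h]
    split_ifs <;> tauto
  simp only [parity, hterm, sum_add_distrib, sum_ite_eq', mem_univ, if_true]

end Balanced

section Coloring

variable [Fintype H] (π : G →+ H) (σ : H → G)

open Classical in
noncomputable def color (A : Finset G) : Bool :=
  if IsBalanced π A then decide (parity σ A = 1)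
  else decide (WellOrderingRel (AddAction.orbit G A) (AddAction.orbit G Aᶜ))

variable {π σ}

lemma orbit_ne_orbit_compl (hH : Odd (Fintype.card H)) {A : Finset G}
    (hA : ¬ IsBalanced π A) : AddAction.orbit G A ≠ AddAction.orbit G Aᶜ := by
  intro horb
  obtain ⟨g, hg⟩ : Aᶜ ∈ AddAction.orbit G A := horb ▸ AddAction.mem_orbit_self Aᶜ
  exact hA (isBalanced_of_vadd_eq_compl hH hg)

lemma color_compl (hH : Odd (Fintype.card H)) (A : Finset G) :
    color π σ Aᶜ = !color π σ A := by
  by_cases hA : IsBalanced π A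
  · rw [color, if_pos (isBalanced_compl_iff.2 hA), color, if_pos hA, parity_compl σ hH,
      decide_add_one_eq_one]
  · rw [color, if_neg (mt isBalanced_compl_iff.1 hA), color, if_neg hA, compl_compl]
    rcases trichotomous_of WellOrderingRel (AddAction.orbit G A) (AddAction.orbit G Aᶜ)
      with h | h | h
    · simp [h, asymm h]
    · exact absurd h (orbit_ne_orbit_compl hH hA)
    · simp [h, asymm h]

lemma color_vadd {A : Finset G} (hA : ¬ IsBalanced π A) (g : G) :
    color π σ (g +ᵥ A) = color π σ A := by
  rw [color, if_neg (mt (isBalanced_vadd_iff g).1 hA), color, if_neg hA, ← vadd_finset_compl,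
    AddAction.orbit_vadd, AddAction.orbit_vadd]

lemma color_symmDiff_fiber (hσ : LeftInverse π σ) {A : Finset G} (hA : IsBalanced π A)
    (t : H) : color π σ (A ∆ fiber π t) = !color π σ A := by
  rw [color, if_pos (hA.symmDiff_fiber t), color, if_pos hA, parity_symmDiff_fiber hσ,
    decide_add_one_eq_one]

end Coloring

section Counting

variable [Fintype H] {π : G →+ H} {σ : H → G} {m : ℕ}

lemma card_isBalanced_color_true_eq (hσ : LeftInverse π σ) (hH1 : 1 < Fintype.card H)
    (i : G) :
    #{A | (#A = m ∧ i ∈ A ∧ color π σ A = true) ∧ IsBalanced π A} =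
      #{A | (#A = m ∧ i ∈ A ∧ color π σ A = false) ∧ IsBalanced π A} := by
  let S : Bool → Finset (Finset G) := fun b =>
    {A | (#A = m ∧ i ∈ A ∧ color π σ A = b) ∧ IsBalanced π A}
  obtain ⟨t, ht⟩ := Fintype.exists_ne_of_one_lt_card hH1 (π i)
  have hmaps : ∀ b, ∀ A ∈ S b, A ∆ fiber π t ∈ S (!b) := by
    intro b A hA
    simp only [S, mem_filter, mem_univ, true_and] at hA ⊢
    obtain ⟨⟨hcard, hi, hcol⟩, hbal⟩ := hA
    refine ⟨⟨hbal.card_symmDiff_fiber t ▸ hcard, ?_, by rw [color_symmDiff_fiber hσ hbal, hcol]⟩,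
      hbal.symmDiff_fiber t⟩
    simp [fiber, mem_symmDiff, hi, ht.symm]
  exact card_nbij' _ _ (hmaps true) (hmaps false) (fun A _ => symmDiff_symmDiff_cancel_right _ _)
    (fun A _ => symmDiff_symmDiff_cancel_right _ _)

lemma card_not_isBalanced_color_true_eq (hH : Odd (Fintype.card H))
    (hG : Fintype.card G = 2 * m) (i : G) :
    #{A | (#A = m ∧ i ∈ A ∧ color π σ A = true) ∧ ¬ IsBalanced π A} =
      #{A | (#A = m ∧ i ∈ A ∧ color π σ A = false) ∧ ¬ IsBalanced π A} := by
  let U : Bool → Finset (Finset G) := fun b => {A | #A = m ∧ color π σ A = b ∧ ¬ IsBalanced π A}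
  have hU : ∀ b, #{A | (#A = m ∧ i ∈ A ∧ color π σ A = b) ∧ ¬ IsBalanced π A} =
      #{A ∈ U b | i ∈ A} := by
    intro b; congr 1; ext A; simp only [U, mem_filter, mem_univ, true_and]; tauto
  have hdeg : ∀ b, 2 * #{A ∈ U b | i ∈ A} = #(U b) := fun b => by
    refine two_mul_card_filter_mem hG (fun g A hA => ?_) (fun A hA => (mem_filter.1 hA).2.1) i
    simp only [U, mem_filter, mem_univ, true_and] at hA ⊢
    obtain ⟨hcard, hcol, hbal⟩ := hA
    exact ⟨by rw [card_vadd_finset, hcard], by rw [color_vadd hbal, hcol],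
      by rwa [isBalanced_vadd_iff]⟩
  have hmaps : ∀ b, ∀ A ∈ U b, Aᶜ ∈ U (!b) := by
    intro b A hA
    simp only [U, mem_filter, mem_univ, true_and] at hA ⊢
    obtain ⟨hcard, hcol, hbal⟩ := hA
    exact ⟨by rw [card_compl, hG, hcard]; omega, by rw [color_compl hH, hcol],
      by rwa [isBalanced_compl_iff]⟩
  have hcompl : #(U true) = #(U false) :=
    card_nbij' _ _ (hmaps true) (hmaps false) (fun A _ => compl_compl A)
      (fun A _ => compl_compl A)
  have htrue := hdeg true
  have hfalse := hdeg false
  rw [hU, hU]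
  omega

end Counting

theorem exists_color_compl_ne_and_card_eq [Fintype H] (π : G →+ H) (hπ : Surjective π)
    (hH : Odd (Fintype.card H)) (hH1 : 1 < Fintype.card H) {m : ℕ}
    (hG : Fintype.card G = 2 * m) :
    ∃ c : Finset G → Bool, (∀ A, c Aᶜ ≠ c A) ∧
      ∀ i : G, #{A | #A = m ∧ i ∈ A ∧ c A = true} = #{A | #A = m ∧ i ∈ A ∧ c A = false} := by
  obtain ⟨σ, hσ⟩ := hπ.hasRightInverse
  refine ⟨color π σ, fun A => by simp [color_compl hH], fun i => ?_⟩
  have hsplit : ∀ b, #{A | #A = m ∧ i ∈ A ∧ color π σ A = b} =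
      #{A | (#A = m ∧ i ∈ A ∧ color π σ A = b) ∧ IsBalanced π A} +
        #{A | (#A = m ∧ i ∈ A ∧ color π σ A = b) ∧ ¬ IsBalanced π A} := fun b => by
    rw [← card_filter_add_card_filter_not (IsBalanced π), filter_filter, filter_filter]
  rw [hsplit, hsplit, card_isBalanced_color_true_eq hσ hH1,
    card_not_isBalanced_color_true_eq hH hG]

end HalfSetColoring

theorem stmt_18 (m : ℕ) (hm : 2 ≤ m) (hnp : ¬ ∃ k : ℕ, m = 2 ^ k) :
    ∃ c : Finset (Fin (2 * m)) → Bool,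
      (∀ A : Finset (Fin (2 * m)), A.card = m → c Aᶜ ≠ c A) ∧
      (∀ i : Fin (2 * m),
        (Finset.univ.filter
          (fun A : Finset (Fin (2 * m)) => A.card = m ∧ i ∈ A ∧ c A = true)).card =
        (Finset.univ.filter
          (fun A : Finset (Fin (2 * m)) => A.card = m ∧ i ∈ A ∧ c A = false)).card) := by
  obtain ⟨p, hp, hpm, hpodd⟩ := m.eq_two_pow_or_exists_odd_prime_and_dvd.resolve_left hnp
  have : NeZero (2 * m) := ⟨by omega⟩
  have : NeZero p := ⟨hp.ne_zero⟩
  let π : Fin (2 * m) →+ ZMod p :=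
    (ZMod.castHom (hpm.mul_left 2) (ZMod p)).toAddMonoidHom.comp
      (ZMod.finEquiv (2 * m)).toAddEquiv.toAddMonoidHom
  have hπ : Surjective π :=
    (ZMod.castHom_surjective (hpm.mul_left 2)).comp (ZMod.finEquiv (2 * m)).surjective
  obtain ⟨c, hc, hcard⟩ := HalfSetColoring.exists_color_compl_ne_and_card_eq π hπ
    (by rwa [ZMod.card]) (by rw [ZMod.card]; exact hp.one_lt) (Fintype.card_fin _)
  exact ⟨c, fun A _ => hc A, hcard⟩
end

section
/- Let m ≥ 2, and suppose the m-subsets of [2m] are 2-colored Red/Blue such that complementary m-sets have distinct colors. For i ∈ [2m], let R(i), B(i) be the numbers of Red and Blue m-sets containing i. Then Σ_i R(i) = Σ_i B(i), R(i) + B(i) = C(2m-1, m) for every i, and R(i) − B(i) mod 4 is the same for all i ∈ [2m]. -/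
/-!
Double counting incidences gives `∑ R = m · #red` and `∑ B = m · #blue`, and complementation is a
bijection between red and blue `m`-sets. For `i ≠ j`, complementation also matches the red sets
through `j` avoiding `i` with the blue sets through `i` avoiding `j`, so `R i - R j` has the parity
of the number `C(2m-2, m-1)` of `m`-sets through `i` avoiding `j`, which is even. Since
`R i - B i = 2 R i - C(2m-1, m)`, the parity of `R i - R j` controls `R i - B i` modulo 4.
-/

open Finset

lemma card_filter_mem_powersetCard {α : Type*} [DecidableEq α] {a : α} {t : Finset α}
    (ha : a ∈ t) {n : ℕ} (hn : 0 < n) :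
    #{A ∈ t.powersetCard n | a ∈ A} = (#t - 1).choose (n - 1) := by
  simpa only [singleton_subset_iff, card_singleton] using
    card_filter_powersetCard_subset {a} t n (singleton_subset_iff.mpr ha) hn

section Fintype

variable {α : Type*} [Fintype α]

def colorClass (c : Finset α → Bool) (m : ℕ) (b : Bool) : Finset (Finset α) :=
  {A | #A = m ∧ c A = b}

variable {c : Finset α → Bool} {m : ℕ}

@[simp]
lemma mem_colorClass {b : Bool} {A : Finset α} : A ∈ colorClass c m b ↔ #A = m ∧ c A = b := by
  simp [colorClass]

lemma card_filter_colorClass_add_not (b : Bool) (Q : Finset α → Prop) [DecidablePred Q] :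
    #{A ∈ colorClass c m b | Q A} + #{A ∈ colorClass c m (!b) | Q A}
      = #{A ∈ powersetCard m univ | Q A} := by
  rw [← card_filter_add_card_filter_not (s := {A ∈ powersetCard m univ | Q A}) (c · = b)]
  congr 2 <;> ext A <;> cases b <;> simp <;> tauto

variable [DecidableEq α]

lemma card_filter_mem_notMem_powersetCard {i j : α} (hij : i ≠ j) {n : ℕ} (hn : 0 < n) :
    #{A ∈ powersetCard n univ | i ∈ A ∧ j ∉ A} = (Fintype.card α - 2).choose (n - 1) := by
  have hsets : {A ∈ powersetCard n (univ : Finset α) | i ∈ A ∧ j ∉ A}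
      = {A ∈ (univ.erase j).powersetCard n | i ∈ A} := by
    ext A
    simp only [mem_filter, mem_powersetCard, subset_univ, true_and, subset_erase]
    tauto
  rw [hsets, card_filter_mem_powersetCard (mem_erase.mpr ⟨hij, mem_univ i⟩) hn,
    card_erase_of_mem (mem_univ j), card_univ, Nat.sub_sub]

lemma sum_card_filter_mem (𝒜 : Finset (Finset α)) :
    ∑ i : α, #{A ∈ 𝒜 | i ∈ A} = ∑ A ∈ 𝒜, #A := by
  simpa [bipartiteAbove, bipartiteBelow, filter_mem_eq_inter] using
    sum_card_bipartiteAbove_eq_sum_card_bipartiteBelow (fun (i : α) (A : Finset α) => i ∈ A)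
      (s := (univ : Finset α)) (t := 𝒜)

lemma sum_card_filter_mem_colorClass (b : Bool) :
    ∑ i, #{A ∈ colorClass c m b | i ∈ A} = m * #(colorClass c m b) := by
  rw [sum_card_filter_mem, sum_congr rfl fun A hA => (mem_colorClass.mp hA).1, sum_const,
    smul_eq_mul, mul_comm]

section Antipodal

variable (hα : Fintype.card α = 2 * m) (hc : ∀ A : Finset α, #A = m → c Aᶜ ≠ c A)
include hα hc

lemma compl_mem_colorClass {b : Bool} {A : Finset α} (hA : A ∈ colorClass c m b) :
    Aᶜ ∈ colorClass c m (!b) := by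
  rw [mem_colorClass] at hA ⊢
  obtain ⟨hAm, rfl⟩ := hA
  refine ⟨by rw [card_compl, hα, hAm]; omega, ?_⟩
  exact Bool.eq_not_iff.mpr (hc A hAm)

lemma card_filter_compl_colorClass (b : Bool) (P : Finset α → Prop) [DecidablePred P] :
    #{A ∈ colorClass c m b | P Aᶜ} = #{A ∈ colorClass c m (!b) | P A} := by
  refine card_nbij' compl compl (fun A hA => ?_) (fun A hA => ?_)
    (fun A _ => compl_compl A) (fun A _ => compl_compl A)
  · rw [mem_coe, mem_filter] at hA ⊢
    exact ⟨compl_mem_colorClass hα hc hA.1, hA.2⟩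
  · rw [mem_coe, mem_filter] at hA ⊢
    refine ⟨?_, by rw [compl_compl]; exact hA.2⟩
    simpa using compl_mem_colorClass hα hc hA.1

lemma card_colorClass_not (b : Bool) : #(colorClass c m (!b)) = #(colorClass c m b) := by
  simpa using (card_filter_compl_colorClass hα hc b (fun _ => True)).symm

lemma even_card_filter_mem_colorClass_add (hm : 2 ≤ m) (b : Bool) (i j : α) :
    Even (#{A ∈ colorClass c m b | i ∈ A} + #{A ∈ colorClass c m b | j ∈ A}) := by
  rcases eq_or_ne i j with rfl | hij
  · exact ⟨_, rfl⟩
  have hsplit : ∀ x y : α, #{A ∈ colorClass c m b | x ∈ A}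
      = #{A ∈ colorClass c m b | x ∈ A ∧ y ∈ A} + #{A ∈ colorClass c m b | x ∈ A ∧ y ∉ A} := by
    intro x y
    rw [← filter_filter, ← filter_filter, card_filter_add_card_filter_not]
  have hswap : #{A ∈ colorClass c m b | j ∈ A ∧ i ∉ A}
      = #{A ∈ colorClass c m (!b) | i ∈ A ∧ j ∉ A} := by
    rw [← card_filter_compl_colorClass hα hc]
    congr 2; ext A; simp only [mem_compl, not_not]; tauto
  have hboth : #{A ∈ colorClass c m b | j ∈ A ∧ i ∈ A}
      = #{A ∈ colorClass c m b | i ∈ A ∧ j ∈ A} := by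
    congr 2; ext A; exact and_comm
  have hcentral : Even #{A ∈ powersetCard m univ | i ∈ A ∧ j ∉ A} := by
    rw [card_filter_mem_notMem_powersetCard hij (by omega), hα,
      show 2 * m - 2 = 2 * (m - 1) by omega, ← Nat.centralBinom_eq_two_mul_choose, even_iff_two_dvd]
    exact Nat.two_dvd_centralBinom_of_one_le (by omega)
  rw [← card_filter_colorClass_add_not b, ← hswap] at hcentral
  rw [hsplit i j, hsplit j i, hboth]
  obtain ⟨k, hk⟩ := hcentral
  exact ⟨#{A ∈ colorClass c m b | i ∈ A ∧ j ∈ A} + k, by omega⟩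

end Antipodal

lemma filter_univ_eq_filter_colorClass (b : Bool) (i : α) :
    univ.filter (fun A : Finset α => #A = m ∧ i ∈ A ∧ c A = b)
      = {A ∈ colorClass c m b | i ∈ A} := by
  ext A; simp only [mem_filter, mem_univ, true_and, mem_colorClass]; tauto

end Fintype

theorem stmt_19 (m : ℕ) (hm : 2 ≤ m) (c : Finset (Fin (2 * m)) → Bool)
    (hc : ∀ A : Finset (Fin (2 * m)), A.card = m → c Aᶜ ≠ c A)
    (R B : Fin (2 * m) → ℕ)
    (hR : ∀ i, R i = (Finset.univ.filter
      (fun A : Finset (Fin (2 * m)) => A.card = m ∧ i ∈ A ∧ c A = true)).card)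
    (hB : ∀ i, B i = (Finset.univ.filter
      (fun A : Finset (Fin (2 * m)) => A.card = m ∧ i ∈ A ∧ c A = false)).card) :
    (∑ i, R i) = (∑ i, B i) ∧
    (∀ i, R i + B i = (2 * m - 1).choose m) ∧
    (∀ i j : Fin (2 * m), ((R i : ℤ) - (B i : ℤ)) % 4 = ((R j : ℤ) - (B j : ℤ)) % 4) := by
  have hα : Fintype.card (Fin (2 * m)) = 2 * m := Fintype.card_fin _
  simp only [filter_univ_eq_filter_colorClass (m := m)] at hR hB
  have hsum : ∀ i, R i + B i = (2 * m - 1).choose m := by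
    intro i
    rw [hR, hB, ← Bool.not_true, card_filter_colorClass_add_not,
      card_filter_mem_powersetCard (mem_univ i) (by omega), card_univ, hα]
    exact Nat.choose_symm_of_eq_add (by omega)
  refine ⟨?_, hsum, fun i j => ?_⟩
  · simp only [hR, hB, sum_card_filter_mem_colorClass]
    rw [← card_colorClass_not hα hc true, Bool.not_true]
  · obtain ⟨k, hk⟩ := even_card_filter_mem_colorClass_add hα hc hm true i j
    have hi := hsum i
    have hj := hsum j
    rw [← hR, ← hR] at hk
    omega
end
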